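/- Let 𝔛 and 𝔜 be finite-dimensional Hilbert spaces, A ∈ B(𝔜) and B ∈ B(𝔛) self-adjoint operators whose spectra are not interlaced, i.e., sup Spec(A) < inf Spec(B) or sup Spec(B) < inf Spec(A). Then for any V ∈ B(𝔛,𝔜), the unique solution W of AW − WB = V satisfies ‖W‖ ≤ ‖V‖ / dist(Spec(A), Spec(B)). -/

import Mathlib

/-!
Suppose `a ≤ A` and `B ≤ b` in the Loewner order. Shifting `A` and `B` by the same real number `m`
does not change `A W - W B`; take `m ≤ b` below the spectrum of `B`. Then `A - m ≥ a - m` gives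
`‖(A - m) W‖ ≥ (a - m) ‖W‖`, while `0 ≤ B - m ≤ b - m` gives `‖W (B - m)‖ ≤ (b - m) ‖W‖`, so
`(a - b) ‖W‖ ≤ ‖A W - W B‖`. With `a = min σ(A)` and `b = max σ(B)`, `a - b` is the distance
between the spectra. The opposite ordering of the spectra reduces to this one by passing to
`-A, -B`. The estimate makes `W ↦ A W - W B` injective, hence bijective in finite dimension.
-/

open ContinuousLinearMap Set

section Sylvester

variable {𝕜 E F G : Type*} [NontriviallyNormedField 𝕜]
  [NormedAddCommGroup E] [NormedSpace 𝕜 E] [NormedAddCommGroup F] [NormedSpace 𝕜 F]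
  [NormedAddCommGroup G] [NormedSpace 𝕜 G]

noncomputable def sylvesterMap (A : F →L[𝕜] F) (B : E →L[𝕜] E) : (E →L[𝕜] F) →L[𝕜] (E →L[𝕜] F) :=
  compL 𝕜 E F F A - (compL 𝕜 E E F).flip B

@[simp]
lemma sylvesterMap_apply (A : F →L[𝕜] F) (B : E →L[𝕜] E) (W : E →L[𝕜] F) :
    sylvesterMap A B W = A ∘L W - W ∘L B :=
  rfl

lemma sylvesterMap_neg_neg (A : F →L[𝕜] F) (B : E →L[𝕜] E) :
    sylvesterMap (-A) (-B) = -sylvesterMap A B := by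
  ext W x
  simp [neg_add_eq_sub]

lemma ContinuousLinearMap.mul_opNorm_le_opNorm_comp {T : F →L[𝕜] G} {c : ℝ}
    (hT : ∀ y, c * ‖y‖ ≤ ‖T y‖) (W : E →L[𝕜] F) : c * ‖W‖ ≤ ‖T ∘L W‖ := by
  rcases le_or_gt c 0 with hc | hc
  · exact (mul_nonpos_of_nonpos_of_nonneg hc (norm_nonneg W)).trans (norm_nonneg _)
  rw [← le_div_iff₀' hc]
  refine W.opNorm_le_bound (by positivity) fun x => ?_
  rw [div_mul_eq_mul_div, le_div_iff₀' hc]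
  exact (hT (W x)).trans ((T ∘L W).le_opNorm x)

end Sylvester

lemma Set.image2_dist_neg_neg {E : Type*} [SeminormedAddCommGroup E] (s t : Set E) :
    image2 dist (-s) (-t) = image2 dist s t := by
  simp [← image_neg_eq_neg, image2_image_left, image2_image_right, dist_neg_neg]

lemma Real.sInf_image2_dist_eq_sub {s t : Set ℝ} {a b : ℝ} (ha : IsLeast s a)
    (hb : IsGreatest t b) (hts : ∀ x ∈ s, ∀ y ∈ t, y ≤ x) :
    sInf (image2 dist s t) = a - b := by
  refine IsLeast.csInf_eq ⟨⟨a, ha.1, b, hb.1, ?_⟩, ?_⟩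
  · rw [Real.dist_eq, abs_of_nonneg (sub_nonneg.2 (hts a ha.1 b hb.1))]
  · rintro _ ⟨x, hx, y, hy, rfl⟩
    rw [Real.dist_eq, abs_of_nonneg (sub_nonneg.2 (hts x hx y hy))]
    linarith [ha.2 hx, hb.2 hy]

lemma IsSelfAdjoint.setOf_dist_spectrum_eq {A B : Type*} [CStarAlgebra A] [CStarAlgebra B]
    {a : A} {b : B} (ha : IsSelfAdjoint a) (hb : IsSelfAdjoint b) :
    {r : ℝ | ∃ x ∈ spectrum ℂ a, ∃ y ∈ spectrum ℂ b, r = dist x y} =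
      image2 dist (spectrum ℝ a) (spectrum ℝ b) := by
  rw [← ha.spectrumRestricts.algebraMap_image, ← hb.spectrumRestricts.algebraMap_image]
  ext r
  simp [eq_comm, Complex.isometry_ofReal.dist_eq]

section Hilbert

variable {X Y : Type*} [NormedAddCommGroup X] [InnerProductSpace ℂ X]
  [NormedAddCommGroup Y] [InnerProductSpace ℂ Y]

lemma sylvesterMap_sub_algebraMap (A : Y →L[ℂ] Y) (B : X →L[ℂ] X) (r : ℝ) :
    sylvesterMap (A - algebraMap ℝ _ r) (B - algebraMap ℝ _ r) = sylvesterMap A B := by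
  ext W x
  simp [Algebra.algebraMap_eq_smul_one]

variable [CompleteSpace X] [CompleteSpace Y]

lemma ContinuousLinearMap.mul_norm_le_norm_apply_of_algebraMap_le {T : Y →L[ℂ] Y} {c : ℝ}
    (hT : algebraMap ℝ _ c ≤ T) (y : Y) : c * ‖y‖ ≤ ‖T y‖ := by
  have hpos := ((nonneg_iff_isPositive _).1 (sub_nonneg.2 hT)).re_inner_nonneg_left y
  have hinner : c * ‖y‖ ^ 2 ≤ ‖T y‖ * ‖y‖ := by
    simp only [sub_apply, inner_sub_left, map_sub, algebraMap_apply] at hpos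
    rw [RCLike.real_smul_eq_coe_smul (K := ℂ), inner_smul_real_left, RCLike.smul_re,
      inner_self_eq_norm_sq] at hpos
    nlinarith [re_inner_le_norm (𝕜 := ℂ) (T y) y]
  rcases (norm_nonneg y).eq_or_lt with hy | hy
  · simp [← hy]
  · nlinarith

lemma sub_mul_norm_le_norm_sylvesterMap {A : Y →L[ℂ] Y} {B : X →L[ℂ] X} {a b : ℝ}
    (hA : algebraMap ℝ _ a ≤ A) (hB : B ≤ algebraMap ℝ _ b) (W : X →L[ℂ] Y) :
    (a - b) * ‖W‖ ≤ ‖sylvesterMap A B W‖ := by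
  set m := min b (-‖B‖)
  have hBsa : IsSelfAdjoint B := by
    simpa using (IsSelfAdjoint.algebraMap (X →L[ℂ] X) (.all b)).sub
      (IsSelfAdjoint.of_nonneg (sub_nonneg.2 hB))
  have hmB : algebraMap ℝ _ m ≤ B :=
    (algebraMap_mono _ (min_le_right _ _)).trans (by simpa using hBsa.neg_algebraMap_norm_le_self)
  have hBm : ‖B - algebraMap ℝ _ m‖ ≤ b - m := by
    rw [CStarAlgebra.norm_le_iff_le_algebraMap _ (sub_nonneg.2 (min_le_left _ _))
      (sub_nonneg.2 hmB), map_sub]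
    exact sub_le_sub_right hB _
  have hAm : algebraMap ℝ _ (a - m) ≤ A - algebraMap ℝ _ m := by
    rw [map_sub]
    exact sub_le_sub_right hA _
  have hlower := mul_opNorm_le_opNorm_comp (mul_norm_le_norm_apply_of_algebraMap_le hAm) W
  have hupper := opNorm_comp_le W (B - algebraMap ℝ _ m)
  have hdiff := norm_sub_norm_le ((A - algebraMap ℝ _ m) ∘L W) (W ∘L (B - algebraMap ℝ _ m))
  rw [← sylvesterMap_apply, sylvesterMap_sub_algebraMap] at hdiff
  nlinarith [mul_le_mul_of_nonneg_left hBm (norm_nonneg W)]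

lemma norm_le_norm_sylvesterMap_div_of_lt {A : Y →L[ℂ] Y} {B : X →L[ℂ] X} (hA : IsSelfAdjoint A)
    (hB : IsSelfAdjoint B) (hBA : ∀ x ∈ spectrum ℝ A, ∀ y ∈ spectrum ℝ B, y < x)
    (W : X →L[ℂ] Y) :
    ‖W‖ ≤ ‖sylvesterMap A B W‖ / sInf (image2 dist (spectrum ℝ A) (spectrum ℝ B)) := by
  rcases subsingleton_or_nontrivial X with hX | hX
  · simp [Subsingleton.elim W 0]
  rcases subsingleton_or_nontrivial Y with hY | hY
  · simp [Subsingleton.elim W 0]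
  obtain ⟨a, haA⟩ := (spectrum.isCompact A).exists_isLeast
    (ContinuousFunctionalCalculus.spectrum_nonempty (R := ℝ) A hA)
  obtain ⟨b, hbB⟩ := (spectrum.isCompact B).exists_isGreatest
    (ContinuousFunctionalCalculus.spectrum_nonempty (R := ℝ) B hB)
  rw [Real.sInf_image2_dist_eq_sub haA hbB fun x hx y hy => (hBA x hx y hy).le,
    le_div_iff₀ (sub_pos.2 (hBA a haA.1 b hbB.1)), mul_comm]
  exact sub_mul_norm_le_norm_sylvesterMap ((algebraMap_le_iff_le_spectrum hA).2 haA.2)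
    ((le_algebraMap_iff_spectrum_le hB).2 hbB.2) W

lemma norm_le_norm_sylvesterMap_div {A : Y →L[ℂ] Y} {B : X →L[ℂ] X} (hA : IsSelfAdjoint A)
    (hB : IsSelfAdjoint B)
    (hsep : (∀ x ∈ spectrum ℝ A, ∀ y ∈ spectrum ℝ B, x < y) ∨
      (∀ x ∈ spectrum ℝ A, ∀ y ∈ spectrum ℝ B, y < x))
    (W : X →L[ℂ] Y) :
    ‖W‖ ≤ ‖sylvesterMap A B W‖ / sInf (image2 dist (spectrum ℝ A) (spectrum ℝ B)) := by
  rcases hsep with hAB | hBA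
  · have hBA' : ∀ x ∈ spectrum ℝ (-A), ∀ y ∈ spectrum ℝ (-B), y < x := by
      rw [← spectrum.neg_eq, ← spectrum.neg_eq]
      exact fun x hx y hy => neg_lt_neg_iff.1 (hAB _ hx _ hy)
    simpa only [sylvesterMap_neg_neg, neg_apply, norm_neg, ← spectrum.neg_eq,
      image2_dist_neg_neg] using norm_le_norm_sylvesterMap_div_of_lt hA.neg hB.neg hBA' W
  · exact norm_le_norm_sylvesterMap_div_of_lt hA hB hBA W

end Hilbert

/-- for self-adjoint A, B on finite-dimensional Hilbert spaces whose
spectra are not interlaced (one lies entirely strictly below the other), the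
Sylvester equation AW − WB = V has a unique solution, and any solution satisfies
‖W‖ ≤ ‖V‖ / dist(Spec A, Spec B). -/
theorem stmt_7 {X Y : Type*}
    [NormedAddCommGroup X] [InnerProductSpace ℂ X] [FiniteDimensional ℂ X]
    [NormedAddCommGroup Y] [InnerProductSpace ℂ Y] [FiniteDimensional ℂ Y]
    (A : Y →L[ℂ] Y) (B : X →L[ℂ] X) (hA : IsSelfAdjoint A) (hB : IsSelfAdjoint B)
    (hsep : (∀ a ∈ spectrum ℂ A, ∀ b ∈ spectrum ℂ B, a.re < b.re) ∨
            (∀ a ∈ spectrum ℂ A, ∀ b ∈ spectrum ℂ B, b.re < a.re))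
    (V : X →L[ℂ] Y) :
    (∃! W : X →L[ℂ] Y, A ∘L W - W ∘L B = V) ∧
    ∀ W : X →L[ℂ] Y, A ∘L W - W ∘L B = V →
      ‖W‖ ≤ ‖V‖ /
        sInf {r : ℝ | ∃ a ∈ spectrum ℂ A, ∃ b ∈ spectrum ℂ B, r = dist a b} := by
  have hbound : ∀ W, ‖W‖ ≤ ‖sylvesterMap A B W‖ /
      sInf {r : ℝ | ∃ a ∈ spectrum ℂ A, ∃ b ∈ spectrum ℂ B, r = dist a b} := by
    simp only [← hA.spectrumRestricts.algebraMap_image, ← hB.spectrumRestricts.algebraMap_image,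
      forall_mem_image, Complex.coe_algebraMap, Complex.ofReal_re] at hsep
    rw [hA.setOf_dist_spectrum_eq hB]
    exact norm_le_norm_sylvesterMap_div hA hB hsep
  have hinj : Function.Injective (sylvesterMap A B) := by
    refine (injective_iff_map_eq_zero _).2 fun W hW => norm_le_zero_iff.1 ?_
    simpa [hW] using hbound W
  refine ⟨?_, fun W hW => hW ▸ hbound W⟩
  exact Function.Bijective.existsUnique (f := (sylvesterMap A B : (X →L[ℂ] Y) →ₗ[ℂ] _))
    ⟨hinj, LinearMap.injective_iff_surjective.1 hinj⟩ V
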